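/- arXiv:2505.01952 — 3 statements merged into one kernel-verified Lean document; each statement's English description precedes it below -/
import Mathlib

section
/- Consider the real 3×3 matrix J = ![![h₁₁, h₁₂, h₁₃], ![0, h₂₂, 0], ![h₃₁, h₃₂, 0]] with h₁₃ < 0 and h₃₁ > 0. Its eigenvalues are h₂₂ together with the roots of λ² - h₁₁λ - h₁₃h₃₁ = 0, and the product of those two roots -h₁₃h₃₁ is positive. Hence if h₂₂ < 0 and h₁₁ < 0, every eigenvalue of J has negative real part. -/
open Polynomial

theorem E3_jacobian_eigenvalues
    (h11 h12 h13 h22 h31 h32 : ℝ) (hh13 : h13 < 0) (hh31 : 0 < h31) :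
    let J : Matrix (Fin 3) (Fin 3) ℝ := !![h11, h12, h13; 0, h22, 0; h31, h32, 0]
    (∀ z : ℂ, ((J.charpoly).map (algebraMap ℝ ℂ)).IsRoot z ↔
        (z = (h22 : ℂ) ∨ z ^ 2 - (h11 : ℂ) * z - (h13 : ℂ) * (h31 : ℂ) = 0)) ∧
    (0 < -h13 * h31) ∧
    (h22 < 0 → h11 < 0 →
      ∀ z : ℂ, ((J.charpoly).map (algebraMap ℝ ℂ)).IsRoot z → z.re < 0) := by
  intro J
  have key : ∀ z : ℂ, eval z (J.charpoly.map (algebraMap ℝ ℂ)) =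
      (z - (h22 : ℂ)) * (z ^ 2 - (h11 : ℂ) * z - (h13 : ℂ) * (h31 : ℂ)) := by
    intro z
    rw [eval_map, Matrix.charpoly, ← coe_eval₂RingHom, RingHom.map_det]
    simp [J, Matrix.charmatrix_apply, Matrix.det_fin_three, Matrix.vecHead, Matrix.vecTail]
    ring
  refine ⟨?_, ?_, ?_⟩
  · intro z
    rw [IsRoot, key z, mul_eq_zero, sub_eq_zero]
  · nlinarith
  · intro hh22 hh11 z hz
    rw [IsRoot, key z, mul_eq_zero, sub_eq_zero] at hz
    rcases hz with h | h
    · rw [h]; exact_mod_cast hh22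
    · have h' := h
      rw [Complex.ext_iff] at h'
      simp [pow_two, Complex.mul_re, Complex.mul_im] at h'
      obtain ⟨hre, him⟩ := h'
      rcases eq_or_ne z.im 0 with hb | hb
      · rw [hb] at hre
        by_contra hc
        push_neg at hc
        nlinarith
      · have : z.im * (2 * z.re - h11) = 0 := by linarith [him]
        have h2 : 2 * z.re - h11 = 0 := by
          rcases mul_eq_zero.mp this with h | h
          · exact absurd h hb
          · exact h
        linarith
end

section
/- Suppose S, P : [0,∞) → ℝ are continuous and converge to S₃ > 0 and P₃ ≥ 0 respectively as t → ∞, and I : [0,∞) → ℝ is a nonnegative differentiable function satisfying I'(t) = (-a₁ + e₀S(t) - d₁P(t)) I(t). If a₁ > e₀S₃ - d₁P₃, then I(t) → 0 as t → ∞. -/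
/-!
On `[a, ∞)` the growth rate `c t = -a1 + e0 * S t - d1 * P t` stays below some `K < 0`,
because its limit `-a1 + e0 * S3 - d1 * P3` is negative. As `I ≥ 0`, this gives
`I' ≤ K * I` there, and Grönwall's inequality bounds `I t` by `I a * exp (K * (t - a)) → 0`.
-/

open Filter Topology Set Real

theorem le_mul_exp_of_hasDerivAt_le_mul {f f' : ℝ → ℝ} {K a : ℝ}
    (hf : ∀ x ≥ a, HasDerivAt f (f' x) x) (bound : ∀ x ≥ a, f' x ≤ K * f x) :
    ∀ x ≥ a, f x ≤ f a * exp (K * (x - a)) := by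
  intro x hx
  have hgronwall := le_gronwallBound_of_liminf_deriv_right_le (f' := f') (ε := 0) (b := x)
    (fun y hy => (hf y hy.1).continuousAt.continuousWithinAt)
    (fun y hy _ hr => (hf y hy.1).hasDerivWithinAt.liminf_right_slope_le hr) le_rfl
    (fun y hy => by simpa using bound y hy.1) x ⟨hx, le_rfl⟩
  rwa [gronwallBound_ε0] at hgronwall

theorem tendsto_zero_of_hasDerivAt_mul_self {f c : ℝ → ℝ} {L : ℝ} (hL : L < 0)
    (hc : Tendsto c atTop (𝓝 L)) (hf : ∀ᶠ t in atTop, HasDerivAt f (c t * f t) t)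
    (hnonneg : ∀ᶠ t in atTop, 0 ≤ f t) : Tendsto f atTop (𝓝 0) := by
  obtain ⟨K, hLK, hK⟩ := exists_between hL
  obtain ⟨a, ha⟩ := eventually_atTop.mp
    ((hc.eventually_le_const hLK).and (hf.and hnonneg))
  have hdecay : ∀ t ≥ a, f t ≤ f a * exp (K * (t - a)) :=
    le_mul_exp_of_hasDerivAt_le_mul (fun t ht => (ha t ht).2.1)
      (fun t ht => mul_le_mul_of_nonneg_right (ha t ht).1 (ha t ht).2.2)
  have hexp : Tendsto (fun t => f a * exp (K * (t - a))) atTop (𝓝 0) := by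
    have hlin : Tendsto (fun t => K * (t - a)) atTop atBot :=
      (tendsto_atTop_add_const_right _ (-a) tendsto_id).const_mul_atTop_of_neg hK
    simpa using (tendsto_exp_atBot.comp hlin).const_mul (f a)
  exact tendsto_of_tendsto_of_tendsto_of_le_of_le' tendsto_const_nhds hexp hnonneg
    (eventually_atTop.mpr ⟨a, hdecay⟩)

theorem infected_prey_extinction_general
    (a1 e0 d1 S3 P3 : ℝ)
    (S P I : ℝ → ℝ)
    (hSlim : Tendsto S atTop (𝓝 S3)) (hPlim : Tendsto P atTop (𝓝 P3))
    (hId : Differentiable ℝ I) (hInn : ∀ t ≥ (0:ℝ), 0 ≤ I t)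
    (hIeq : ∀ t ≥ (0:ℝ), deriv I t = (-a1 + e0 * S t - d1 * P t) * I t)
    (hthr : e0 * S3 - d1 * P3 < a1) :
    Tendsto I atTop (𝓝 0) := by
  have hrate : Tendsto (fun t => -a1 + e0 * S t - d1 * P t) atTop
      (𝓝 (-a1 + e0 * S3 - d1 * P3)) :=
    (tendsto_const_nhds.add (hSlim.const_mul e0)).sub (hPlim.const_mul d1)
  refine tendsto_zero_of_hasDerivAt_mul_self (by linarith) hrate ?_
    (eventually_atTop.mpr ⟨0, hInn⟩)
  filter_upwards [eventually_ge_atTop 0] with t ht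
  exact hIeq t ht ▸ (hId t).hasDerivAt

theorem infected_prey_extinction
    (a1 e0 d1 S3 P3 : ℝ) (ha1 : 0 < a1) (he0 : 0 < e0) (hd1 : 0 < d1)
    (hS3 : 0 < S3) (hP3 : 0 ≤ P3)
    (S P I : ℝ → ℝ)
    (hScont : ContinuousOn S (Set.Ici 0)) (hPcont : ContinuousOn P (Set.Ici 0))
    (hSlim : Tendsto S atTop (𝓝 S3)) (hPlim : Tendsto P atTop (𝓝 P3))
    (hId : Differentiable ℝ I) (hInn : ∀ t ≥ (0:ℝ), 0 ≤ I t)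
    (hIeq : ∀ t ≥ (0:ℝ), deriv I t = (-a1 + e0 * S t - d1 * P t) * I t)
    (hthr : e0 * S3 - d1 * P3 < a1) :
    Tendsto I atTop (𝓝 0) :=
  infected_prey_extinction_general a1 e0 d1 S3 P3 S P I hSlim hPlim hId hInn hIeq hthr
end

section
/- Let α, β : ℝ → ℝ be differentiable, λ(L) = α(L) + iβ(L) a root of λ³ + Ω₁(L)λ² + Ω₂(L)λ + Ω₃(L) = 0 with differentiable coefficients, and suppose at L = L₀ we have α(L₀) = 0, β(L₀) = √(Ω₂(L₀)) with Ω₂(L₀) > 0, and Ω₃(L₀) = Ω₁(L₀)Ω₂(L₀). Then the derivative of the real part satisfies α'(L₀) = (Ω₃'(L₀) - Ω₂(L₀)Ω₁'(L₀) - Ω₁(L₀)Ω₂'(L₀)) / (2(Ω₂(L₀) + Ω₁(L₀)²)), which is nonzero iff (Ω₁Ω₂)'(L₀) ≠ Ω₃'(L₀). -/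
theorem hopf_transversality
    (α β Ω1 Ω2 Ω3 : ℝ → ℝ) (L0 : ℝ)
    (hα : Differentiable ℝ α) (hβ : Differentiable ℝ β)
    (hΩ1 : Differentiable ℝ Ω1) (hΩ2 : Differentiable ℝ Ω2)
    (hΩ3 : Differentiable ℝ Ω3)
    (hroot : ∀ L : ℝ,
      ((α L : ℂ) + Complex.I * (β L : ℂ)) ^ 3
        + (Ω1 L : ℂ) * ((α L : ℂ) + Complex.I * (β L : ℂ)) ^ 2
        + (Ω2 L : ℂ) * ((α L : ℂ) + Complex.I * (β L : ℂ)) + (Ω3 L : ℂ) = 0)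
    (hα0 : α L0 = 0) (hΩ2pos : 0 < Ω2 L0) (hβ0 : β L0 = Real.sqrt (Ω2 L0))
    (hΩ30 : Ω3 L0 = Ω1 L0 * Ω2 L0) :
    deriv α L0 =
      (deriv Ω3 L0 - Ω2 L0 * deriv Ω1 L0 - Ω1 L0 * deriv Ω2 L0) /
        (2 * (Ω2 L0 + (Ω1 L0) ^ 2)) ∧
    (deriv α L0 ≠ 0 ↔ deriv (fun L => Ω1 L * Ω2 L) L0 ≠ deriv Ω3 L0) := by
  have hlam : HasDerivAt (fun L => (α L : ℂ) + Complex.I * (β L : ℂ))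
      ((Complex.ofReal (deriv α L0)) + Complex.I * (Complex.ofReal (deriv β L0))) L0 :=
    ((hα L0).hasDerivAt.ofReal_comp).add
      (((hβ L0).hasDerivAt.ofReal_comp).const_mul Complex.I)
  set lp : ℂ := (Complex.ofReal (deriv α L0)) + Complex.I * (Complex.ofReal (deriv β L0))
    with hlpdef
  set lam : ℂ := (α L0 : ℂ) + Complex.I * (β L0 : ℂ) with hlamdef
  have hg : HasDerivAt (fun L => ((α L : ℂ) + Complex.I * (β L : ℂ))
        * ((α L : ℂ) + Complex.I * (β L : ℂ)) * ((α L : ℂ) + Complex.I * (β L : ℂ))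
        + (Ω1 L : ℂ) * (((α L : ℂ) + Complex.I * (β L : ℂ)) * ((α L : ℂ) + Complex.I * (β L : ℂ)))
        + (Ω2 L : ℂ) * ((α L : ℂ) + Complex.I * (β L : ℂ)) + (Ω3 L : ℂ))
      (((lp * lam + lam * lp) * lam + lam * lam * lp)
        + ((Complex.ofReal (deriv Ω1 L0)) * (lam * lam)
            + (Ω1 L0 : ℂ) * (lp * lam + lam * lp))
        + ((Complex.ofReal (deriv Ω2 L0)) * lam + (Ω2 L0 : ℂ) * lp)
        + (Complex.ofReal (deriv Ω3 L0))) L0 :=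
    ((((hlam.mul hlam).mul hlam).add
      (((hΩ1 L0).hasDerivAt.ofReal_comp).mul (hlam.mul hlam))).add
      (((hΩ2 L0).hasDerivAt.ofReal_comp).mul hlam)).add (hΩ3 L0).hasDerivAt.ofReal_comp
  have hfun : (fun L => ((α L : ℂ) + Complex.I * (β L : ℂ))
        * ((α L : ℂ) + Complex.I * (β L : ℂ)) * ((α L : ℂ) + Complex.I * (β L : ℂ))
        + (Ω1 L : ℂ) * (((α L : ℂ) + Complex.I * (β L : ℂ)) * ((α L : ℂ) + Complex.I * (β L : ℂ)))
        + (Ω2 L : ℂ) * ((α L : ℂ) + Complex.I * (β L : ℂ)) + (Ω3 L : ℂ))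
      = fun _ : ℝ => (0 : ℂ) := by
    funext L
    have := hroot L
    linear_combination this
  rw [hfun] at hg
  have hD : (((lp * lam + lam * lp) * lam + lam * lam * lp)
        + ((Complex.ofReal (deriv Ω1 L0)) * (lam * lam)
            + (Ω1 L0 : ℂ) * (lp * lam + lam * lp))
        + ((Complex.ofReal (deriv Ω2 L0)) * lam + (Ω2 L0 : ℂ) * lp)
        + (Complex.ofReal (deriv Ω3 L0))) = 0 :=
    hg.unique (hasDerivAt_const L0 0)
  -- extract real/imaginary parts
  set s := Real.sqrt (Ω2 L0) with hsdef
  have hs2 : s * s = Ω2 L0 := Real.mul_self_sqrt hΩ2pos.le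
  set a' := deriv α L0
  set b' := deriv β L0
  set w1 := Ω1 L0
  set w2 := Ω2 L0
  set w1' := deriv Ω1 L0
  set w2' := deriv Ω2 L0
  set w3' := deriv Ω3 L0
  rw [hlpdef, hlamdef, hα0, hβ0, Complex.ext_iff] at hD
  simp only [Complex.add_re, Complex.add_im, Complex.mul_re, Complex.mul_im,
    Complex.ofReal_re, Complex.ofReal_im, Complex.I_re, Complex.I_im,
    Complex.zero_re, Complex.zero_im] at hD
  obtain ⟨hre, him⟩ := hD
  ring_nf at hre him
  have hs2' : s ^ 2 = w2 := by rw [sq]; exact hs2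
  rw [hs2'] at hre him
  have hspos : 0 < s := Real.sqrt_pos.mpr hΩ2pos
  have hdenne : (2 * (w2 + w1 ^ 2)) ≠ 0 := by positivity
  have hw2ne : w2 ≠ 0 := ne_of_gt hΩ2pos
  have key : a' = (w3' - w2 * w1' - w1 * w2') / (2 * (w2 + w1 ^ 2)) := by
    rw [eq_div_iff hdenne]
    have key2 : a' * (2 * (w2 + w1 ^ 2)) * w2 = (w3' - w2 * w1' - w1 * w2') * w2 := by
      linear_combination (-w2) * hre + (w1 * s) * him - (2 * a' * w1 ^ 2 + w1 * w2') * hs2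
    exact mul_right_cancel₀ hw2ne key2
  have hmul : deriv (fun L => Ω1 L * Ω2 L) L0 = w1' * w2 + w1 * w2' :=
    deriv_mul (hΩ1 L0) (hΩ2 L0)
  refine ⟨key, ?_⟩
  rw [key, hmul, div_ne_zero_iff]
  constructor
  · rintro ⟨hN, -⟩ heq
    exact hN (by linarith)
  · intro h
    exact ⟨fun h0 => h (by linarith), hdenne⟩
end
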